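/- arXiv:2507.20047 — 2 statements merged into one kernel-verified Lean document; each statement's English description precedes it below -/
import Mathlib

section
/- Ward's linkage is weight-stable: for any nonempty disjoint finite clusters A, B ⊆ ℝ^k, d_Ward(A ∪ B, A) = (|B| / (2|A| + |B|)) · d_Ward(A, B); in particular d_Ward(A ∪ B, A) ≤ (|B| / (|A| + |B|)) · d_Ward(A, B). -/
/-! The centroid of `A ∪ B` lies on the segment from `μ(A)` to `μ(B)`, at fraction
`|B| / (|A| + |B|)` of the way, so `‖μ(A ∪ B) - μ(A)‖` is that fraction of `‖μ(A) - μ(B)‖`.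
Substituting into the closed form of Ward's linkage with weights `|A| + |B|` and `|A|` gives the
factor `|B| / (2|A| + |B|)`, which is at most `|B| / (|A| + |B|)`. -/

open scoped Classical

noncomputable def centroid {k : ℕ} (A : Finset (EuclideanSpace ℝ (Fin k))) :
    EuclideanSpace ℝ (Fin k) :=
  (A.card : ℝ)⁻¹ • ∑ a ∈ A, a

noncomputable def dWard {k : ℕ} (X Y : Finset (EuclideanSpace ℝ (Fin k))) : ℝ :=
  ((X.card : ℝ) * Y.card / (X.card + Y.card)) * ‖centroid X - centroid Y‖ ^ 2

open scoped Finset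

section
variable {k : ℕ} {A B : Finset (EuclideanSpace ℝ (Fin k))}

theorem card_smul_centroid (A : Finset (EuclideanSpace ℝ (Fin k))) :
    (#A : ℝ) • centroid A = ∑ a ∈ A, a := by
  rcases A.eq_empty_or_nonempty with rfl | hA
  · simp
  · exact smul_inv_smul₀ (by exact_mod_cast hA.card_pos.ne') _

theorem centroid_union_sub_centroid_left (hAB : Disjoint A B) :
    centroid (A ∪ B) - centroid A = (#B / (#A + #B) : ℝ) • (centroid B - centroid A) := by
  rcases (A ∪ B).eq_empty_or_nonempty with hempty | hne
  · obtain ⟨rfl, rfl⟩ := Finset.union_eq_empty.mp hempty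
    simp
  have hn : (#A + #B : ℝ) ≠ 0 := by
    rw [← Nat.cast_add, ← Finset.card_union_of_disjoint hAB]
    exact_mod_cast hne.card_pos.ne'
  have hmean : (#A + #B : ℝ) • centroid (A ∪ B) = (#A : ℝ) • centroid A + (#B : ℝ) • centroid B := by
    rw [card_smul_centroid, card_smul_centroid, ← Nat.cast_add,
      ← Finset.card_union_of_disjoint hAB, card_smul_centroid, Finset.sum_union hAB]
  apply smul_right_injective _ hn
  dsimp only
  rw [smul_sub, hmean, smul_smul, mul_div_cancel₀ _ hn]
  module

theorem dWard_nonneg (X Y : Finset (EuclideanSpace ℝ (Fin k))) : 0 ≤ dWard X Y := by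
  unfold dWard
  positivity

theorem dWard_union_left (hAB : Disjoint A B) :
    dWard (A ∪ B) A = (#B / (2 * #A + #B) : ℝ) * dWard A B := by
  rcases (A ∪ B).eq_empty_or_nonempty with hempty | hne
  · obtain ⟨rfl, rfl⟩ := Finset.union_eq_empty.mp hempty
    simp [dWard]
  have hn : (0 : ℝ) < #A + #B := by
    rw [← Nat.cast_add, ← Finset.card_union_of_disjoint hAB]
    exact_mod_cast hne.card_pos
  have h2n : (0 : ℝ) < 2 * #A + #B := by linarith [(#A).cast_nonneg (α := ℝ)]
  rw [dWard, dWard, Finset.card_union_of_disjoint hAB, centroid_union_sub_centroid_left hAB,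
    norm_smul, norm_sub_rev, Real.norm_of_nonneg (by positivity)]
  push_cast
  rw [show (#A + #B + #A : ℝ) = 2 * #A + #B by ring]
  field_simp

end

theorem ward_weight_stable_general {k : ℕ} (A B : Finset (EuclideanSpace ℝ (Fin k)))
    (hB : B.Nonempty) (hAB : Disjoint A B) :
    dWard (A ∪ B) A = ((B.card : ℝ) / (2 * A.card + B.card)) * dWard A B ∧
    dWard (A ∪ B) A ≤ ((B.card : ℝ) / (A.card + B.card)) * dWard A B := by
  refine ⟨dWard_union_left hAB, ?_⟩
  rw [dWard_union_left hAB]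
  gcongr
  · exact dWard_nonneg A B
  · linarith [(#A).cast_nonneg (α := ℝ)]

theorem ward_weight_stable {k : ℕ} (A B : Finset (EuclideanSpace ℝ (Fin k)))
    (hA : A.Nonempty) (hB : B.Nonempty) (hAB : Disjoint A B) :
    dWard (A ∪ B) A = ((B.card : ℝ) / (2 * A.card + B.card)) * dWard A B ∧
    dWard (A ∪ B) A ≤ ((B.card : ℝ) / (A.card + B.card)) * dWard A B :=
  ward_weight_stable_general A B hB hAB
end

section
/- Ward's linkage approximately satisfies the triangle inequality with constant 4: for nonempty pairwise disjoint finite clusters A, B, C ⊆ ℝ^k with |B| ≥ min(|A|, |C|), we have d_Ward(A, C) ≤ 4·(d_Ward(A, B) + d_Ward(B, C)). -/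
section Weight

variable {a b c : ℝ}

lemma mul_div_add_le_min (ha : 0 ≤ a) (hb : 0 ≤ b) : a * b / (a + b) ≤ min a b := by
  rcases (add_nonneg ha hb).eq_or_lt with hab | hab
  · rw [← hab, div_zero]
    exact le_min ha hb
  rw [div_le_iff₀ hab]
  rcases le_total a b with h | h
  · rw [min_eq_left h]; nlinarith
  · rw [min_eq_right h]; nlinarith

lemma min_div_two_le_mul_div_add (ha : 0 ≤ a) (hb : 0 ≤ b) : min a b / 2 ≤ a * b / (a + b) := by
  rcases (add_nonneg ha hb).eq_or_lt with hab | hab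
  · have ha0 : a = 0 := by linarith
    simp [ha0, hb]
  rw [div_le_div_iff₀ two_pos hab]
  rcases le_total a b with h | h
  · rw [min_eq_left h]; nlinarith
  · rw [min_eq_right h]; nlinarith

lemma mul_div_add_le_two_mul_mul_div_add (ha : 0 ≤ a) (hb : 0 ≤ b) (hc : 0 ≤ c)
    (hmin : min a c ≤ b) : a * c / (a + c) ≤ 2 * (a * b / (a + b)) :=
  calc a * c / (a + c) ≤ min a c := mul_div_add_le_min ha hc
    _ ≤ min a b := le_min (min_le_left a c) hmin
    _ ≤ 2 * (a * b / (a + b)) := by linarith [min_div_two_le_mul_div_add ha hb]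

end Weight

lemma norm_sub_sq_le_two_mul {E : Type*} [SeminormedAddCommGroup E] (x y z : E) :
    ‖x - z‖ ^ 2 ≤ 2 * (‖x - y‖ ^ 2 + ‖y - z‖ ^ 2) :=
  (pow_le_pow_left₀ (norm_nonneg _) (norm_sub_le_norm_sub_add_norm_sub x y z) 2).trans add_sq_le

theorem ward_approx_triangle_general {k : ℕ} (A B C : Finset (EuclideanSpace ℝ (Fin k)))
    (hcard : min A.card C.card ≤ B.card) :
    dWard A C ≤ 4 * (dWard A B + dWard B C) := by
  have hmin : min (A.card : ℝ) C.card ≤ B.card := by exact_mod_cast hcard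
  have ha : (0 : ℝ) ≤ A.card := A.card.cast_nonneg
  have hb : (0 : ℝ) ≤ B.card := B.card.cast_nonneg
  have hc : (0 : ℝ) ≤ C.card := C.card.cast_nonneg
  have hAB := mul_div_add_le_two_mul_mul_div_add ha hb hc hmin
  have hBC : (A.card * C.card / (A.card + C.card) : ℝ) ≤
      2 * (B.card * C.card / (B.card + C.card)) := by
    simpa only [mul_comm, add_comm] using
      mul_div_add_le_two_mul_mul_div_add hc hb ha (by rwa [min_comm])
  have hwAC : (0 : ℝ) ≤ A.card * C.card / (A.card + C.card) := by positivity
  unfold dWard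
  calc _ ≤ (A.card * C.card / (A.card + C.card) : ℝ) *
        (2 * (‖centroid A - centroid B‖ ^ 2 + ‖centroid B - centroid C‖ ^ 2)) :=
        mul_le_mul_of_nonneg_left (norm_sub_sq_le_two_mul _ _ _) hwAC
    _ ≤ _ := by
        linarith [mul_le_mul_of_nonneg_right hAB (sq_nonneg ‖centroid A - centroid B‖),
          mul_le_mul_of_nonneg_right hBC (sq_nonneg ‖centroid B - centroid C‖)]

theorem ward_approx_triangle {k : ℕ} (A B C : Finset (EuclideanSpace ℝ (Fin k)))
    (hA : A.Nonempty) (hB : B.Nonempty) (hC : C.Nonempty)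
    (hAB : Disjoint A B) (hAC : Disjoint A C) (hBC : Disjoint B C)
    (hcard : min A.card C.card ≤ B.card) :
    dWard A C ≤ 4 * (dWard A B + dWard B C) :=
  ward_approx_triangle_general A B C hcard
end
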